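/- arXiv:2012.02143 — 3 statements merged into one kernel-verified Lean document; each statement's English description precedes it below -/
import Mathlib

section
/- There exists a problem f :⊆ ℕ^ℕ ⇉ ℕ^ℕ that is discontinuous (has no continuous realizer) but not effectively discontinuous. -/
noncomputable section

/-- Baire space `ℕ^ℕ`. -/
abbrev Baire : Type := ℕ → ℕ

/-- The Cantor pairing `⟨n,k⟩ = (n+k)(n+k+1)/2 + k`. -/
def cpair (n k : ℕ) : ℕ := (n + k) * (n + k + 1) / 2 + k

/-- The inverse of the Cantor pairing. -/
noncomputable def cunpair (m : ℕ) : ℕ × ℕ :=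
  Classical.epsilon fun x : ℕ × ℕ => cpair x.1 x.2 = m

/-- A fixed bijective numbering `w : ℕ → List ℕ` of finite words. -/
def word (n : ℕ) : List ℕ := Denumerable.ofNat (List ℕ) n

/-- `l` is a finite prefix of the infinite sequence `p`. -/
def IsPrefixOf (l : List ℕ) (p : Baire) : Prop := l = (List.range l.length).map p

/-- Two words are comparable in the prefix order. -/
def WordComparable (u v : List ℕ) : Prop := u <+: v ∨ v <+: u

/-- The word `w(n_i)` decoded from the `i`-th entry of the code `q`. -/
noncomputable def wn (q : Baire) (i : ℕ) : List ℕ := word (cunpair (q i)).1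

/-- The word `w(k_i)` decoded from the `i`-th entry of the code `q`. -/
noncomputable def wk (q : Baire) (i : ℕ) : List ℕ := word (cunpair (q i)).2

/-- The code `q` is consistent. -/
def ConsistentCode (q : Baire) : Prop :=
  ∀ i j, WordComparable (wn q i) (wn q j) → WordComparable (wk q i) (wk q j)

/-- The continuous partial function `Φ_q :⊆ ℕ^ℕ → ℕ^ℕ` coded by `q`. -/
noncomputable def Phi (q : Baire) : Baire →. Baire := fun p =>
  ⟨ConsistentCode q ∧ ∀ m : ℕ, ∃ i, IsPrefixOf (wn q i) p ∧ m < (wk q i).length,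
   fun _ => Classical.epsilon fun x : Baire =>
      ∀ i, IsPrefixOf (wn q i) p → IsPrefixOf (wk q i) x⟩

/-- The pairing `⟨q,p⟩` on Baire space. -/
def bpair (q p : Baire) : Baire := fun n => if n % 2 = 0 then q (n / 2) else p (n / 2)

/-- Even part of a sequence. -/
def evens (r : Baire) : Baire := fun n => r (2 * n)

/-- Odd part of a sequence. -/
def odds (r : Baire) : Baire := fun n => r (2 * n + 1)

/-- The universal function `U(⟨q,p⟩) = Φ_q(p)`. -/
noncomputable def U : Baire →. Baire := fun r => Phi (evens r) (odds r)

/-- `h` is monotone for the prefix order. -/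
def MonotoneWord (h : List ℕ → List ℕ) : Prop := ∀ u v, u <+: v → h u <+: h v

/-- `h` approximates the partial function `F`. -/
def Approximates (h : List ℕ → List ℕ) (F : Baire →. Baire) : Prop :=
  ∀ p, ∀ hp : (F p).Dom,
    (∀ v, IsPrefixOf v p → IsPrefixOf (h v) ((F p).get hp)) ∧
    (∀ m : ℕ, ∃ v, IsPrefixOf v p ∧ m < (h v).length)

/-- `F :⊆ ℕ^ℕ → ℕ^ℕ` is continuous: some monotone word function approximates it. -/
def ContinuousPF (F : Baire →. Baire) : Prop := ∃ h, MonotoneWord h ∧ Approximates h F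

/-- `F :⊆ ℕ^ℕ → ℕ^ℕ` is computable: some computable monotone word function approximates it. -/
def ComputablePF (F : Baire →. Baire) : Prop :=
  ∃ h, Computable h ∧ MonotoneWord h ∧ Approximates h F

/-- A total function is computable iff it is computable as a partial function with full domain. -/
def ComputableTotal (F : Baire → Baire) : Prop := ComputablePF fun p => Part.some (F p)

/-- A problem (multivalued function on Baire space). -/
abbrev Problem : Type := Baire → Set Baire

/-- `F` is a realizer of the problem `f`. -/
def Realizes (F : Baire →. Baire) (f : Problem) : Prop :=
  ∀ p, (f p).Nonempty → ∃ h : (F p).Dom, (F p).get h ∈ f p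

/-- `f` is continuous: it has a continuous realizer. -/
def ContinuousProblem (f : Problem) : Prop := ∃ F, ContinuousPF F ∧ Realizes F f

/-- The discontinuity problem `DIS`. -/
noncomputable def DIS : Problem := fun p => {q | q ∉ U p}

/-- `D` is a discontinuity function for `f`. -/
def DiscontinuityFunction (D : Baire → Baire) (f : Problem) : Prop :=
  ∀ q, (f (D q)).Nonempty ∧ ∀ y ∈ Phi q (D q), y ∉ f (D q)

/-- `f` is computably discontinuous. -/
def ComputablyDiscontinuous (f : Problem) : Prop :=
  ∃ D, ComputableTotal D ∧ DiscontinuityFunction D f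

/-- `f` is effectively discontinuous. -/
def EffectivelyDiscontinuous (f : Problem) : Prop :=
  ∃ D : Baire → Baire, Continuous D ∧ DiscontinuityFunction D f

/-- Weihrauch reducibility `f ≤_W g`. -/
def WeihrauchRed (f g : Problem) : Prop :=
  ∃ H K : Baire →. Baire, ComputablePF H ∧ ComputablePF K ∧
    ∀ G : Baire →. Baire, Realizes G g →
      Realizes (fun p => (K p).bind fun s => (G s).bind fun t => H (bpair p t)) f

/-- Strong Weihrauch reducibility `f ≤_sW g`. -/
def StrongWeihrauchRed (f g : Problem) : Prop :=
  ∃ H K : Baire →. Baire, ComputablePF H ∧ ComputablePF K ∧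
    ∀ G : Baire →. Baire, Realizes G g →
      Realizes (fun p => (K p).bind fun s => (G s).bind fun t => H t) f

/-- Continuous Weihrauch reducibility `f ≤*_W g`. -/
def ContWeihrauchRed (f g : Problem) : Prop :=
  ∃ H K : Baire →. Baire, ContinuousPF H ∧ ContinuousPF K ∧
    ∀ G : Baire →. Baire, Realizes G g →
      Realizes (fun p => (K p).bind fun s => (G s).bind fun t => H (bpair p t)) f

/-- Continuous strong Weihrauch reducibility `f ≤*_sW g`. -/
def ContStrongWeihrauchRed (f g : Problem) : Prop :=
  ∃ H K : Baire →. Baire, ContinuousPF H ∧ ContinuousPF K ∧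
    ∀ G : Baire →. Baire, Realizes G g →
      Realizes (fun p => (K p).bind fun s => (G s).bind fun t => H t) f

/-- Concatenation of the first `n` moves. -/
def concatN (ms : ℕ → List ℕ) (n : ℕ) : List ℕ := ((List.range n).map ms).flatten

/-- The concatenated play is infinite. -/
def PlayInf (ms : ℕ → List ℕ) : Prop := ∀ m : ℕ, ∃ n, m < (concatN ms n).length

/-- The infinite sequence determined by an infinite play. -/
noncomputable def playLim (ms : ℕ → List ℕ) : Baire :=
  Classical.epsilon fun p : Baire => ∀ n, IsPrefixOf (concatN ms n) p

/-- Player II wins the run of the Wadge game of `f` given by the moves `xs` of I and `ys` of II. -/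
def WadgeIIWins (f : Problem) (xs ys : ℕ → List ℕ) : Prop :=
  (PlayInf xs ∧ (f (playLim xs)).Nonempty) → (PlayInf ys ∧ playLim ys ∈ f (playLim xs))

/-- The list of first `n` moves. -/
def histW (xs : ℕ → List ℕ) (n : ℕ) : List (List ℕ) := (List.range n).map xs

/-- `σ` is a winning strategy for Player II in the Wadge game of `f`. -/
def WadgeWinningII (f : Problem) (σ : List (List ℕ) → List ℕ) : Prop :=
  ∀ xs : ℕ → List ℕ, WadgeIIWins f xs fun i => σ (histW xs (i + 1))

/-- `σ` is a winning strategy for Player I in the Wadge game of `f`. -/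
def WadgeWinningI (f : Problem) (σ : List (List ℕ) → List ℕ) : Prop :=
  ∀ ys : ℕ → List ℕ, ¬ WadgeIIWins f (fun i => σ (histW ys i)) ys

/-- The list of first `n` values of a sequence. -/
def histN (x : Baire) (n : ℕ) : List ℕ := (List.range n).map x

/-- Player II wins the run `(x,y)` of the Lipschitz game of `f`. -/
def LipIIWins (f : Problem) (x y : Baire) : Prop := (f x).Nonempty → y ∈ f x

/-- `σ` is a winning strategy for Player II in the Lipschitz game of `f`. -/
def LipWinningII (f : Problem) (σ : List ℕ → ℕ) : Prop :=
  ∀ x : Baire, LipIIWins f x fun i => σ (histN x (i + 1))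

/-- `σ` is a winning strategy for Player I in the Lipschitz game of `f`. -/
def LipWinningI (f : Problem) (σ : List ℕ → ℕ) : Prop :=
  ∀ y : Baire, ¬ LipIIWins f (fun i => σ (histN y i)) y

/-- `σ` is a winning strategy for Player II in the Gale–Stewart game `A`. -/
def GSWinningII (A : Set Baire) (σ : List ℕ → ℕ) : Prop :=
  ∀ x : Baire, bpair x (fun i => σ (histN x (i + 1))) ∈ A

/-- `σ` is a winning strategy for Player I in the Gale–Stewart game `A`. -/
def GSWinningI (A : Set Baire) (σ : List ℕ → ℕ) : Prop :=
  ∀ y : Baire, bpair (fun i => σ (histN y i)) y ∉ A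

/-- The totalization `Tf` of `f`. -/
def Totalization (f : Problem) : Problem := fun p => {q | (f p).Nonempty → q ∈ f p}

/-- The paired graph `⟨graph(Tf)⟩ ⊆ ℕ^ℕ`. -/
def pairedGraph (f : Problem) : Set Baire :=
  {r | ∃ x y : Baire, r = bpair x y ∧ y ∈ Totalization f x}

/-- Domain of the word concatenation map `w*`. -/
def wstarDom (p : Baire) : Prop := PlayInf fun i => word (p i)

/-- The word concatenation map `w* : p ↦ w(p 0) w(p 1) ⋯` (on its domain). -/
noncomputable def wstar (p : Baire) : Baire := playLim fun i => word (p i)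

/-- The problem `f^w = w*⁻¹ ∘ f ∘ w*`. -/
noncomputable def wordLift (f : Problem) : Problem := fun p =>
  {q | wstarDom p ∧ (f (wstar p)).Nonempty ∧ wstarDom q ∧ wstar q ∈ f (wstar p)}

/-- The `i`-th component of a tupled sequence. -/
def tupleComp (p : Baire) (i : ℕ) : Baire := fun n => p (cpair i n)

/-- The parallelization `⟨f⟩` of `f`. -/
def Parallelization (f : Problem) : Problem := fun p =>
  {q | ∀ i, tupleComp q i ∈ f (tupleComp p i)}

/-- Turing reducibility: `p` is computable relative to the oracle `q`. -/
def TuringLe (p q : Baire) : Prop := ∃ F : Baire →. Baire, ComputablePF F ∧ p ∈ F q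

end


/-!
Take the problem `p ↦ {q | q ≠ c p}`. It is discontinuous as soon as the graph of `c` meets the
graph of every continuous partial function. A discontinuity function `D` for it, applied to the
code of the constant function `y`, would give `c (D (code y)) = y` for every `y`; so it is not
effectively discontinuous as soon as every continuous `D` violates this for some `y`. There are
only `𝔠` continuous functions of either kind, and a transfinite recursion of length `𝔠`, choosing
at each stage points outside the fewer than `𝔠` already used, meets all these requirements.
-/

open Cardinal Set Function TopologicalSpace

universe u

section Diagonalization

variable {X ι : Type u}

noncomputable def fresh [Nonempty X] (s : Set X) : X := Classical.epsilon (· ∉ s)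

lemma fresh_notMem [Nonempty X] {s : Set X} (h : #s < #X) : fresh s ∉ s := by
  refine Classical.epsilon_spec (p := (· ∉ s)) ?_
  by_contra! hs
  exact h.ne (by rw [eq_univ_of_forall hs, mk_univ])

variable [Infinite X] [LinearOrder ι] [WellFoundedLT ι] (F G : ι → X → X)

/-- For `stage F G i = (p, y)`, `diag F G` takes the value `F i p` at `p`, and `y` witnesses
`diag F G (G i y) ≠ y`; both are chosen fresh with respect to all earlier stages. -/
noncomputable def stage : ι → X × X :=
  WellFoundedLT.fix fun i prev =>
    let p := fresh (range (fun j : Iio i => (prev j j.2).1) ∪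
      range fun j : Iio i => G j (prev j j.2).2)
    (p, fresh (insert (Classical.arbitrary X) (insert (F i p)
      (range fun j : Iio i => F j (prev j j.2).1))))

lemma stage_fst (i : ι) : (stage F G i).1 = fresh (range (fun j : Iio i => (stage F G j).1) ∪
    range fun j : Iio i => G j (stage F G j).2) := by
  rw [stage, WellFoundedLT.fix_eq]

lemma stage_snd (i : ι) : (stage F G i).2 = fresh (insert (Classical.arbitrary X)
    (insert (F i (stage F G i).1) (range fun j : Iio i => F j (stage F G j).1))) := by
  rw [stage, WellFoundedLT.fix_eq]

open scoped Classical in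
noncomputable def diag (p : X) : X :=
  if h : ∃ i, (stage F G i).1 = p then F h.choose p else Classical.arbitrary X

variable {F G}

lemma stage_fst_ne (hι : ∀ i : ι, #(Iio i) < #X) {i j : ι} (hj : j < i) :
    (stage F G j).1 ≠ (stage F G i).1 ∧ G j (stage F G j).2 ≠ (stage F G i).1 := by
  have hrange (g : Iio i → X) : #(range g) < #X := mk_range_le.trans_lt (hι i)
  have hfresh : (stage F G i).1 ∉ range (fun j : Iio i => (stage F G j).1) ∪
      range fun j : Iio i => G j (stage F G j).2 := by
    rw [stage_fst]
    exact fresh_notMem <| (mk_union_le _ _).trans_lt <|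
      add_lt_of_lt (aleph0_le_mk X) (hrange _) (hrange _)
  exact ⟨fun h => hfresh (Or.inl ⟨⟨j, hj⟩, h⟩), fun h => hfresh (Or.inr ⟨⟨j, hj⟩, h⟩)⟩

lemma stage_snd_spec (hι : ∀ i : ι, #(Iio i) < #X) (i : ι) :
    (stage F G i).2 ≠ Classical.arbitrary X ∧ (stage F G i).2 ≠ F i (stage F G i).1 ∧
      ∀ j < i, F j (stage F G j).1 ≠ (stage F G i).2 := by
  have hrange (g : Iio i → X) : #(range g) < #X := mk_range_le.trans_lt (hι i)
  have hone : (1 : Cardinal) < #X := one_lt_aleph0.trans_le (aleph0_le_mk X)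
  have hfresh : (stage F G i).2 ∉ insert (Classical.arbitrary X)
      (insert (F i (stage F G i).1) (range fun j : Iio i => F j (stage F G j).1)) := by
    rw [stage_snd]
    exact fresh_notMem <| (mk_insert_le.trans (add_le_add_left mk_insert_le 1)).trans_lt <|
      add_lt_of_lt (aleph0_le_mk X) (add_lt_of_lt (aleph0_le_mk X) (hrange _) hone) hone
  simp only [mem_insert_iff, mem_range, not_or] at hfresh
  exact ⟨hfresh.1, hfresh.2.1, fun j hj h => hfresh.2.2 ⟨⟨j, hj⟩, h⟩⟩

lemma stage_fst_injective (hι : ∀ i : ι, #(Iio i) < #X) : Injective fun i => (stage F G i).1 :=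
  .of_lt_imp_ne fun _ _ h => (stage_fst_ne hι h).1

lemma diag_stage_fst (hι : ∀ i : ι, #(Iio i) < #X) (i : ι) :
    diag F G (stage F G i).1 = F i (stage F G i).1 := by
  have h : ∃ j, (stage F G j).1 = (stage F G i).1 := ⟨i, rfl⟩
  rw [diag, dif_pos h, stage_fst_injective hι h.choose_spec]

lemma diag_G_stage_snd_ne (hι : ∀ i : ι, #(Iio i) < #X) (i : ι) :
    diag F G (G i (stage F G i).2) ≠ (stage F G i).2 := by
  obtain ⟨hdefault, hcurrent, hearlier⟩ := stage_snd_spec hι i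
  by_cases h : ∃ j, (stage F G j).1 = G i (stage F G i).2
  · obtain ⟨j, hj⟩ := h
    rw [← hj, diag_stage_fst hι]
    rcases lt_trichotomy j i with hji | rfl | hij
    · exact hearlier j hji
    · exact hcurrent.symm
    · exact absurd hj.symm (stage_fst_ne hι hij).2
  · rw [diag, dif_neg h]
    exact hdefault.symm

theorem exists_forall_exists_eq_and_forall_exists_ne (hι : ∀ i : ι, #(Iio i) < #X)
    (F G : ι → X → X) : ∃ c : X → X, (∀ i, ∃ p, c p = F i p) ∧ ∀ i, ∃ y, c (G i y) ≠ y :=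
  ⟨diag F G, fun i => ⟨_, diag_stage_fst hι i⟩, fun i => ⟨_, diag_G_stage_snd_ne hι i⟩⟩

end Diagonalization

theorem exists_forall_exists_eq_and_forall_exists_ne_of_mk_le {X A B : Type u} [Infinite X]
    [Nonempty A] [Nonempty B] (hA : #A ≤ #X) (hB : #B ≤ #X) (F : A → X → X) (G : B → X → X) :
    ∃ c : X → X, (∀ a, ∃ p, c p = F a p) ∧ ∀ b, ∃ y, c (G b y) ≠ y := by
  have hmk : #(#X).ord.ToType = #X := by rw [mk_toType, card_ord]
  obtain ⟨eA⟩ := (le_def _ _).1 (hA.trans hmk.ge)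
  obtain ⟨eB⟩ := (le_def _ _).1 (hB.trans hmk.ge)
  obtain ⟨c, hF, hG⟩ := exists_forall_exists_eq_and_forall_exists_ne
    (fun i => by simpa using mk_Iio_lt i) (F ∘ invFun eA) (G ∘ invFun eB)
  refine ⟨c, fun a => ?_, fun b => ?_⟩
  · simpa only [comp_apply, leftInverse_invFun eA.injective a] using hF (eA a)
  · simpa only [comp_apply, leftInverse_invFun eB.injective b] using hG (eB b)

theorem mk_continuousMap_le {X Y : Type u} [TopologicalSpace X] [SeparableSpace X]
    [TopologicalSpace Y] [T2Space Y] [Nonempty Y] : #C(X, Y) ≤ #Y ^ ℵ₀ := by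
  obtain ⟨s, hs, hdense⟩ := exists_countable_dense X
  have : Countable s := hs.to_subtype
  have hinj : Injective fun (f : C(X, Y)) (x : s) => f x := fun f g h =>
    ContinuousMap.coe_injective <|
      f.continuous.ext_on hdense g.continuous fun x hx => congrFun h ⟨x, hx⟩
  calc #C(X, Y) ≤ #(s → Y) := mk_le_of_injective hinj
    _ = #Y ^ #s := by rw [mk_arrow, lift_id, lift_id]
    _ ≤ #Y ^ ℵ₀ := power_le_power_left (mk_ne_zero Y) mk_le_aleph0

lemma mk_baire : #Baire = 𝔠 := by
  rw [mk_arrow, lift_id, mk_nat, aleph0_power_aleph0]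

lemma mk_wordFun_le_mk_baire : #(List ℕ → List ℕ) ≤ #Baire :=
  (mk_congr ((Denumerable.eqv _).arrowCongr (Denumerable.eqv _))).le

lemma mk_continuousMap_baire_le : #C(Baire, Baire) ≤ #Baire :=
  mk_continuousMap_le.trans (by rw [mk_baire, continuum_power_aleph0])

lemma IsPrefixOf.getElem_eq {l : List ℕ} {x : Baire} (h : IsPrefixOf l x) {k : ℕ}
    (hk : k < l.length) : l[k] = x k := by
  simpa using List.getElem_of_eq h hk

lemma eq_of_forall_exists_isPrefixOf {x y : Baire}
    (h : ∀ m, ∃ l : List ℕ, m < l.length ∧ IsPrefixOf l x ∧ IsPrefixOf l y) : x = y := by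
  funext k
  obtain ⟨l, hk, hx, hy⟩ := h k
  rw [← hx.getElem_eq hk, ← hy.getElem_eq hk]

lemma length_histN (x : Baire) (n : ℕ) : (histN x n).length = n := by simp [histN]

lemma isPrefixOf_histN (x : Baire) (n : ℕ) : IsPrefixOf (histN x n) x := by
  simp [IsPrefixOf, histN]

lemma histN_prefix_histN (x : Baire) {i j : ℕ} (h : i ≤ j) : histN x i <+: histN x j := by
  have : histN x i = (histN x j).take i := by
    rw [histN, histN, ← List.map_take, List.take_range, min_eq_left h]
  exact this ▸ List.take_prefix _ _

lemma cpair_lt_cpair_of_add_lt {a b c d : ℕ} (h : a + b < c + d) : cpair a b < cpair c d := by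
  have hsucc (s : ℕ) : (s + 1) * (s + 1 + 1) / 2 = s * (s + 1) / 2 + (s + 1) := by
    rw [show (s + 1) * (s + 1 + 1) = s * (s + 1) + 2 * (s + 1) by ring,
      Nat.add_mul_div_left _ _ two_pos]
  have hmono : (a + b + 1) * (a + b + 1 + 1) / 2 ≤ (c + d) * (c + d + 1) / 2 :=
    Nat.div_le_div_right (Nat.mul_le_mul h (by omega))
  have := hsucc (a + b)
  unfold cpair
  omega

lemma cpair_inj {a b c d : ℕ} (h : cpair a b = cpair c d) : a = c ∧ b = d := by
  have hsum : a + b = c + d := by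
    by_contra hne
    rcases Nat.lt_or_gt_of_ne hne with hlt | hlt
    · exact (cpair_lt_cpair_of_add_lt hlt).ne h
    · exact (cpair_lt_cpair_of_add_lt hlt).ne h.symm
  unfold cpair at h
  rw [hsum] at h
  omega

lemma cunpair_cpair (n k : ℕ) : cunpair (cpair n k) = (n, k) := by
  obtain ⟨h1, h2⟩ := cpair_inj <|
    Classical.epsilon_spec (p := fun x : ℕ × ℕ => cpair x.1 x.2 = cpair n k) ⟨(n, k), rfl⟩
  exact Prod.ext h1 h2

def constCode (y : Baire) : Baire := fun i =>
  cpair (Encodable.encode ([] : List ℕ)) (Encodable.encode (histN y i))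

lemma wn_constCode (y : Baire) (i : ℕ) : wn (constCode y) i = [] := by
  rw [wn, constCode, cunpair_cpair, word, Denumerable.ofNat_encode]

lemma wk_constCode (y : Baire) (i : ℕ) : wk (constCode y) i = histN y i := by
  rw [wk, constCode, cunpair_cpair, word, Denumerable.ofNat_encode]

lemma consistentCode_constCode (y : Baire) : ConsistentCode (constCode y) := by
  intro i j _
  rw [WordComparable, wk_constCode, wk_constCode]
  rcases le_total i j with h | h
  · exact Or.inl (histN_prefix_histN y h)
  · exact Or.inr (histN_prefix_histN y h)

lemma mem_Phi_constCode (y p : Baire) : y ∈ Phi (constCode y) p := by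
  have hnil (i : ℕ) : IsPrefixOf (wn (constCode y) i) p := by rw [wn_constCode]; rfl
  refine ⟨⟨consistentCode_constCode y,
    fun m => ⟨m + 1, hnil _, by simp [wk_constCode, length_histN]⟩⟩, ?_⟩
  have hspec := Classical.epsilon_spec (p := fun x : Baire =>
    ∀ i, IsPrefixOf (wn (constCode y) i) p → IsPrefixOf (wk (constCode y) i) x)
    ⟨y, fun i _ => wk_constCode y i ▸ isPrefixOf_histN y i⟩
  show Classical.epsilon _ = y
  refine eq_of_forall_exists_isPrefixOf fun m =>
    ⟨histN y (m + 1), by simp [length_histN], ?_, isPrefixOf_histN y _⟩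
  simpa only [wk_constCode] using hspec (m + 1) (hnil _)

noncomputable def wordLim (h : List ℕ → List ℕ) (p : Baire) : Baire :=
  Classical.epsilon fun x : Baire => ∀ v, IsPrefixOf v p → IsPrefixOf (h v) x

lemma Approximates.wordLim_eq {h : List ℕ → List ℕ} {F : Baire →. Baire} (hh : Approximates h F)
    (p : Baire) (hp : (F p).Dom) : wordLim h p = (F p).get hp := by
  obtain ⟨hpre, hlong⟩ := hh p hp
  have hspec := Classical.epsilon_spec (p := fun x : Baire =>
    ∀ v, IsPrefixOf v p → IsPrefixOf (h v) x) ⟨_, hpre⟩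
  refine eq_of_forall_exists_isPrefixOf fun m => ?_
  obtain ⟨v, hv, hm⟩ := hlong m
  exact ⟨h v, hm, hspec v hv, hpre v hv⟩

def avoiding (c : Baire → Baire) : Problem := fun p => {q | q ≠ c p}

lemma not_continuousProblem_avoiding {c : Baire → Baire} (hc : ∀ h, ∃ p, c p = wordLim h p) :
    ¬ ContinuousProblem (avoiding c) := by
  rintro ⟨F, ⟨h, -, hh⟩, hF⟩
  obtain ⟨p, hp⟩ := hc h
  obtain ⟨hdom, hne⟩ := hF p (exists_ne (c p))
  exact hne (hp.trans (hh.wordLim_eq p hdom)).symm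

lemma not_effectivelyDiscontinuous_avoiding {c : Baire → Baire}
    (hc : ∀ D : C(Baire, Baire), ∃ y, c (D (constCode y)) ≠ y) :
    ¬ EffectivelyDiscontinuous (avoiding c) := by
  rintro ⟨D, hD, hdisc⟩
  obtain ⟨y, hy⟩ := hc ⟨D, hD⟩
  exact (hdisc (constCode y)).2 y (mem_Phi_constCode y _) hy.symm

/-- There exists a problem that is discontinuous but not effectively discontinuous. -/
theorem exists_discontinuous_not_effectively_discontinuous :
    ∃ f : Problem, ¬ ContinuousProblem f ∧ ¬ EffectivelyDiscontinuous f := by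
  obtain ⟨c, hF, hG⟩ := exists_forall_exists_eq_and_forall_exists_ne_of_mk_le
    mk_wordFun_le_mk_baire mk_continuousMap_baire_le wordLim fun D => D ∘ constCode
  exact ⟨avoiding c, not_continuousProblem_avoiding hF, not_effectivelyDiscontinuous_avoiding hG⟩
end

section
/- Every partial single-valued function g :⊆ ℕ^ℕ → ℕ^ℕ, regarded as the problem f with dom(f) = dom(g) and f(p) := {g(p)}, is either continuous or effectively discontinuous. -/
/-!
If `g` is continuous on its domain, then for a word `v` the common prefix (of length at most
`|v|`) of all values of `g` on inputs extending `v` is a monotone word function approximating `g`.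

Otherwise there are `p₀ ∈ dom g` and `m` such that inputs `P k ∈ dom g`, agreeing with `p₀` on `k`
places, have values differing from `g p₀` below `m`. Given a code `q`, the discontinuity function
looks for the first entry `⟨n, k⟩` of `q` with `w(n) ⊑ p₀` and `|w(k)| ≥ m`. If `w(k)` agrees with
`g p₀` below `m` it answers some `P k` still extending `w(n)`, otherwise `p₀`; either way `Φ_q`
errs there. If there is no such entry it answers `p₀`, where `Φ_q` cannot be defined. When the
first hit is at `i`, the answer agrees with `p₀` on the first `i` places, so its first `N` values
depend only on the first `N` entries of `q`: the discontinuity function is continuous.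
-/

open PiNat Filter Topology

lemma isPrefixOf_map_range (p : Baire) (n : ℕ) : IsPrefixOf ((List.range n).map p) p := by
  simp [IsPrefixOf]

lemma IsPrefixOf.mono {u v : List ℕ} {p : Baire} (hv : IsPrefixOf v p) (huv : u <+: v) :
    IsPrefixOf u p := by
  rw [List.prefix_iff_eq_take] at huv
  rw [IsPrefixOf, huv, hv, ← List.map_take, List.take_range]
  simp

lemma IsPrefixOf.isPrefixOf_iff {u : List ℕ} {x y : Baire} (h : IsPrefixOf u x) :
    IsPrefixOf u y ↔ y ∈ cylinder x u.length := by
  rw [IsPrefixOf, mem_cylinder_iff]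
  conv_lhs => rw [h]
  simp [List.map_inj_left, eq_comm]

lemma isPrefixOf_iff_getElem {v : List ℕ} {p : Baire} :
    IsPrefixOf v p ↔ ∀ j (hj : j < v.length), v[j] = p j := by
  rw [IsPrefixOf, List.ext_get_iff]
  simp

lemma IsPrefixOf.wordComparable {u v : List ℕ} {p : Baire} (hu : IsPrefixOf u p)
    (hv : IsPrefixOf v p) : WordComparable u v := by
  wlog h : u.length ≤ v.length generalizing u v
  · exact (this hv hu (le_of_not_ge h)).symm
  left
  rw [List.prefix_iff_eq_take, hu, hv, ← List.map_take, List.take_range]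
  simp [h]

lemma WordComparable.getElem_eq {u v : List ℕ} (h : WordComparable u v) {j : ℕ}
    (hu : j < u.length) (hv : j < v.length) : u[j] = v[j] := by
  rcases h with h | h
  · exact h.getElem hu
  · exact (h.getElem hv).symm

lemma exists_isPrefixOf_of_wordComparable {ι : Type*} (w : ι → List ℕ)
    (hc : ∀ i j, WordComparable (w i) (w j)) (hu : ∀ m, ∃ i, m < (w i).length) :
    ∃ x : Baire, ∀ i, IsPrefixOf (w i) x := by
  choose long hlong using hu
  refine ⟨fun j => (w (long j))[j]'(hlong j), fun i => isPrefixOf_iff_getElem.2 fun j hj => ?_⟩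
  exact (hc i (long j)).getElem_eq hj (hlong j)

lemma isPrefixOf_of_mem_Phi {q p y : Baire} (hy : y ∈ Phi q p) {i : ℕ}
    (hi : IsPrefixOf (wn q i) p) : IsPrefixOf (wk q i) y := by
  obtain ⟨⟨hc, hu⟩, rfl⟩ := hy
  have hlim : ∃ x : Baire, ∀ i, IsPrefixOf (wn q i) p → IsPrefixOf (wk q i) x := by
    obtain ⟨x, hx⟩ := exists_isPrefixOf_of_wordComparable
      (fun i : {i // IsPrefixOf (wn q i) p} => wk q i)
      (fun i j => hc i j (i.2.wordComparable j.2))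
      (fun m => let ⟨i, hi, hm⟩ := hu m; ⟨⟨i, hi⟩, hm⟩)
    exact ⟨x, fun i hi => hx ⟨i, hi⟩⟩
  exact Classical.epsilon_spec hlim i hi

lemma hasBasis_nhds_cylinder (x : Baire) : (𝓝 x).HasBasis (fun _ => True) (cylinder x) := by
  refine ⟨fun s => ⟨fun hs => ?_, fun ⟨n, _, hn⟩ => mem_of_superset
    ((isOpen_cylinder _ x n).mem_nhds (self_mem_cylinder x n)) hn⟩⟩
  obtain ⟨t, hts, ht, hxt⟩ := mem_nhds_iff.1 hs
  obtain ⟨_, ⟨y, n, rfl⟩, hx, hyt⟩ :=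
    (isTopologicalBasis_cylinders _).exists_subset_of_mem_open hxt ht
  exact ⟨n, trivial, (mem_cylinder_iff_eq.1 hx ▸ hyt).trans hts⟩

lemma continuous_of_mem_cylinder {f : Baire → Baire}
    (hf : ∀ x y n, y ∈ cylinder x n → f y ∈ cylinder (f x) n) : Continuous f :=
  continuous_iff_continuousAt.2 fun x =>
    ((hasBasis_nhds_cylinder x).tendsto_iff (hasBasis_nhds_cylinder (f x))).2
      fun n _ => ⟨n, trivial, fun y hy => hf x y n hy⟩

lemma PFun.continuous_fn_iff {g : Baire →. Baire} :
    Continuous (fun p : g.Dom => g.fn p p.2) ↔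
      ∀ p y, y ∈ g p → ∀ m, ∃ k, ∀ p' y', y' ∈ g p' → p' ∈ cylinder p k → y' ∈ cylinder y m := by
  simp only [continuous_iff_continuousAt, ContinuousAt, nhds_subtype,
    ((hasBasis_nhds_cylinder _).comap _).tendsto_iff (hasBasis_nhds_cylinder _)]
  simp only [Dom, Set.mem_ofPred_eq, fn, mem_cylinder_iff, Subtype.forall, true_and, forall_const,
    Part.mem_eq, forall_exists_index, forall_apply_eq_imp_iff]
  rfl

def wordCylinder (v : List ℕ) : Set Baire := {p | IsPrefixOf v p}

lemma wordCylinder_antitone {u v : List ℕ} (huv : u <+: v) : wordCylinder v ⊆ wordCylinder u :=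
  fun _ hp => IsPrefixOf.mono hp huv

lemma IsPrefixOf.wordCylinder_eq {v : List ℕ} {p : Baire} (h : IsPrefixOf v p) :
    wordCylinder v = cylinder p v.length :=
  Set.ext fun _ => h.isPrefixOf_iff

open Classical in
noncomputable def agreeLength (S : Set Baire) (N : ℕ) : ℕ :=
  Nat.findGreatest (fun n => ∀ y ∈ S, ∀ z ∈ S, z ∈ cylinder y n) N

noncomputable def commonPrefix (S : Set Baire) (N : ℕ) : List ℕ :=
  (List.range (agreeLength S N)).map (Classical.epsilon (· ∈ S))

lemma mem_cylinder_agreeLength {S : Set Baire} {N : ℕ} {y z : Baire} (hy : y ∈ S) (hz : z ∈ S) :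
    z ∈ cylinder y (agreeLength S N) := by
  classical
  exact Nat.findGreatest_spec (P := fun n => ∀ y ∈ S, ∀ z ∈ S, z ∈ cylinder y n) (m := 0)
    (Nat.zero_le _) (fun _ _ _ _ => by simp [cylinder_zero]) y hy z hz

lemma isPrefixOf_commonPrefix {S : Set Baire} {y : Baire} (hy : y ∈ S) (N : ℕ) :
    IsPrefixOf (commonPrefix S N) y := by
  rw [commonPrefix, (isPrefixOf_map_range _ _).isPrefixOf_iff]
  simpa using mem_cylinder_agreeLength (Classical.epsilon_spec ⟨y, hy⟩) hy

lemma le_length_commonPrefix {S : Set Baire} {n N : ℕ}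
    (hS : ∀ y ∈ S, ∀ z ∈ S, z ∈ cylinder y n) (hn : n ≤ N) : n ≤ (commonPrefix S N).length := by
  classical
  simpa [commonPrefix, agreeLength] using Nat.le_findGreatest hn hS

lemma map_range_prefix (f : ℕ → ℕ) {a b : ℕ} (h : a ≤ b) :
    (List.range a).map f <+: (List.range b).map f := by
  simpa [List.take_range, h] using (List.take_prefix a (List.range b)).map f

lemma commonPrefix_prefix {S T : Set Baire} {M N : ℕ} (hTS : T ⊆ S)
    (hT : S.Nonempty → T.Nonempty) (hMN : M ≤ N) : commonPrefix S M <+: commonPrefix T N := by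
  have hlen : agreeLength S M ≤ agreeLength T N := by
    classical
    unfold agreeLength
    exact (Nat.findGreatest_mono_left (fun n h y hy z hz => h y (hTS hy) z (hTS hz)) M).trans
      (Nat.findGreatest_mono_right _ hMN)
  have heps : ∀ j < agreeLength S M,
      Classical.epsilon (· ∈ S) j = Classical.epsilon (· ∈ T) j := by
    rcases S.eq_empty_or_nonempty with rfl | hS
    · simp [Set.subset_empty_iff.1 hTS]
    · exact fun j hj => (mem_cylinder_iff.1 (mem_cylinder_agreeLength (Classical.epsilon_spec hS)
        (hTS (Classical.epsilon_spec (hT hS)))) j hj).symm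
  rw [commonPrefix, commonPrefix, List.map_congr_left (fun j hj => heps j (List.mem_range.1 hj))]
  exact map_range_prefix _ hlen

namespace PFun

variable (g : Baire →. Baire)

open Classical in
noncomputable def domPrefixLength (v : List ℕ) : ℕ :=
  Nat.findGreatest (fun t => (g.image (wordCylinder (v.take t))).Nonempty) v.length

noncomputable def domPrefix (v : List ℕ) : List ℕ := v.take (g.domPrefixLength v)

/-- Using the longest prefix of `v` whose cylinder meets `g.Dom`, rather than `v` itself, keeps
`approxWord` monotone on words that leave the domain. -/
noncomputable def approxWord (v : List ℕ) : List ℕ :=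
  commonPrefix (g.image (wordCylinder (g.domPrefix v))) v.length

variable {g}

lemma domPrefix_eq_self {v : List ℕ} (h : (g.image (wordCylinder v)).Nonempty) :
    g.domPrefix v = v := by
  classical
  have : g.domPrefixLength v = v.length :=
    le_antisymm (Nat.findGreatest_le _) (Nat.le_findGreatest le_rfl (by simpa using h))
  rw [domPrefix, this, List.take_length]

lemma image_domPrefix_nonempty (h : (g.image (wordCylinder [])).Nonempty) (v : List ℕ) :
    (g.image (wordCylinder (g.domPrefix v))).Nonempty := by
  classical
  exact Nat.findGreatest_spec (P := fun t => (g.image (wordCylinder (v.take t))).Nonempty)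
    (Nat.zero_le _) (by simpa using h)

lemma domPrefix_prefix {u v : List ℕ} (huv : u <+: v)
    (hu : (g.image (wordCylinder (g.domPrefix u))).Nonempty) :
    g.domPrefix u <+: g.domPrefix v := by
  classical
  have hle : g.domPrefixLength u ≤ u.length := Nat.findGreatest_le _
  have htake : g.domPrefix u = v.take (g.domPrefixLength u) := by
    obtain ⟨w, rfl⟩ := huv
    exact (List.take_append_of_le_length hle).symm
  rw [htake] at hu ⊢
  exact List.take_prefix_take_left
    (Nat.le_findGreatest (hle.trans huv.length_le) hu)

lemma monotoneWord_approxWord : MonotoneWord g.approxWord := by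
  intro u v huv
  by_cases hdom : (g.image (wordCylinder [])).Nonempty
  · have hpre := domPrefix_prefix huv (image_domPrefix_nonempty hdom u)
    exact commonPrefix_prefix (PFun.image_mono _ (wordCylinder_antitone hpre))
      (fun _ => image_domPrefix_nonempty hdom v) huv.length_le
  · have hempty : ∀ w, g.image (wordCylinder w) = ∅ := fun w =>
      Set.not_nonempty_iff_eq_empty.1 fun h =>
        hdom (h.mono (PFun.image_mono _ (wordCylinder_antitone List.nil_prefix)))
    rw [approxWord, approxWord, hempty, hempty]
    exact commonPrefix_prefix subset_rfl id huv.length_le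

lemma approximates_approxWord
    (hg : ∀ p y, y ∈ g p → ∀ m, ∃ k, ∀ p' y', y' ∈ g p' → p' ∈ cylinder p k → y' ∈ cylinder y m) :
    Approximates g.approxWord g := by
  intro p hp
  have hy : (g p).get hp ∈ g p := Part.get_mem hp
  have happrox : ∀ v, IsPrefixOf v p →
      g.approxWord v = commonPrefix (g.image (wordCylinder v)) v.length := fun v hv => by
    rw [approxWord, domPrefix_eq_self ⟨_, p, hv, hy⟩]
  refine ⟨fun v hv => ?_, fun m => ?_⟩
  · rw [happrox v hv]
    exact isPrefixOf_commonPrefix ((g.mem_image _ _).2 ⟨p, hv, hy⟩) _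
  obtain ⟨k, hk⟩ := hg p _ hy (m + 1)
  have hv := isPrefixOf_map_range p (max k (m + 1))
  refine ⟨_, hv, ?_⟩
  have hclose : ∀ z ∈ g.image (wordCylinder ((List.range (max k (m + 1))).map p)),
      z ∈ cylinder ((g p).get hp) (m + 1) := by
    rintro z ⟨p', hp', hz⟩
    rw [hv.wordCylinder_eq] at hp'
    exact hk p' z hz (cylinder_anti _ (by simp) hp')
  rw [happrox _ hv]
  refine Nat.lt_of_succ_le (le_length_commonPrefix (fun z₁ h₁ z₂ h₂ => ?_) (by simp))
  exact mem_cylinder_iff_eq.2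
    ((mem_cylinder_iff_eq.1 (hclose z₂ h₂)).trans (mem_cylinder_iff_eq.1 (hclose z₁ h₁)).symm)

def toProblem (g : Baire →. Baire) : Problem := fun p => {y | y ∈ g p}

lemma continuousProblem_toProblem (hg : Continuous fun p : g.Dom => g.fn p p.2) :
    ContinuousProblem g.toProblem := by
  refine ⟨g, ⟨g.approxWord, monotoneWord_approxWord, approximates_approxWord
    (continuous_fn_iff.1 hg)⟩, ?_⟩
  rintro p ⟨y, hy⟩
  exact ⟨Part.dom_iff_mem.2 ⟨y, hy⟩, Part.get_mem _⟩

end PFun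

section FirstHit

variable {C : ℕ → Prop} {Ψ : ℕ → ℕ → Baire} {p₀ : Baire}

open Classical in
noncomputable def firstHit (C : ℕ → Prop) (Ψ : ℕ → ℕ → Baire) (p₀ q : Baire) : Baire :=
  if h : ∃ i, C (q i) then Ψ (Nat.find h) (q (Nat.find h)) else p₀

lemma firstHit_mem_cylinder_of_forall_not (hΨ : ∀ i a, Ψ i a ∈ cylinder p₀ i) {q : Baire}
    {N : ℕ} (hq : ∀ i < N, ¬ C (q i)) : firstHit C Ψ p₀ q ∈ cylinder p₀ N := by
  classical
  rw [firstHit]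
  split_ifs with h
  · exact cylinder_anti _ (not_lt.1 fun hlt => hq _ hlt (Nat.find_spec h)) (hΨ _ _)
  · exact self_mem_cylinder _ _

lemma firstHit_mem_cylinder (hΨ : ∀ i a, Ψ i a ∈ cylinder p₀ i) {q q' : Baire} {N : ℕ}
    (hqq' : q' ∈ cylinder q N) : firstHit C Ψ p₀ q' ∈ cylinder (firstHit C Ψ p₀ q) N := by
  classical
  by_cases hq : ∃ i < N, C (q i)
  · obtain ⟨i, hiN, hi⟩ := hq
    have h : ∃ i, C (q i) := ⟨i, hi⟩
    have hlt : Nat.find h < N := (Nat.find_min' h hi).trans_lt hiN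
    have hsame : ∀ j ≤ Nat.find h, q' j = q j := fun j hj => hqq' j (hj.trans_lt hlt)
    have h' : ∃ i, C (q' i) := ⟨_, (hsame _ le_rfl).symm ▸ Nat.find_spec h⟩
    have hfind : Nat.find h' = Nat.find h := (Nat.find_eq_iff h').2
      ⟨(hsame _ le_rfl).symm ▸ Nat.find_spec h,
        fun j hj => (hsame j hj.le).symm ▸ Nat.find_min h hj⟩
    rw [firstHit, firstHit, dif_pos h, dif_pos h', hfind, hsame _ le_rfl]
    exact self_mem_cylinder _ _
  · push Not at hq
    have hq' : ∀ i < N, ¬ C (q' i) := fun i hi => hqq' i hi ▸ hq i hi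
    have h₁ := mem_cylinder_iff_eq.1 (firstHit_mem_cylinder_of_forall_not hΨ hq')
    have h₂ := mem_cylinder_iff_eq.1 (firstHit_mem_cylinder_of_forall_not hΨ hq)
    exact mem_cylinder_iff_eq.2 (h₁.trans h₂.symm)

lemma continuous_firstHit (hΨ : ∀ i a, Ψ i a ∈ cylinder p₀ i) : Continuous (firstHit C Ψ p₀) :=
  continuous_of_mem_cylinder fun _ _ _ => firstHit_mem_cylinder hΨ

end FirstHit

def Commits (p₀ : Baire) (m a : ℕ) : Prop :=
  IsPrefixOf (word (cunpair a).1) p₀ ∧ m ≤ (word (cunpair a).2).length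

open Classical in
noncomputable def counterInput (p₀ y₀ : Baire) (m : ℕ) (P : ℕ → Baire) (i a : ℕ) : Baire :=
  if IsPrefixOf ((word (cunpair a).2).take m) y₀ then P (max i (word (cunpair a).1).length) else p₀

namespace PFun

variable {g : Baire →. Baire} {p₀ y₀ : Baire} {m : ℕ} {P Y : ℕ → Baire}

lemma counterInput_mem_cylinder (hP : ∀ k, P k ∈ cylinder p₀ k) (i a : ℕ) :
    counterInput p₀ y₀ m P i a ∈ cylinder p₀ (max i (word (cunpair a).1).length) := by
  rw [counterInput]
  split_ifs
  exacts [hP _, self_mem_cylinder _ _]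

lemma discontinuityFunction_firstHit (hy₀ : y₀ ∈ g p₀) (hY : ∀ k, Y k ∈ g (P k))
    (hP : ∀ k, P k ∈ cylinder p₀ k) (hne : ∀ k, Y k ∉ cylinder y₀ m) :
    DiscontinuityFunction (firstHit (Commits p₀ m) (counterInput p₀ y₀ m P) p₀) g.toProblem := by
  classical
  intro q
  set D := firstHit (Commits p₀ m) (counterInput p₀ y₀ m P) p₀ q with hDdef
  have hdom : (g.toProblem D).Nonempty := by
    simp only [hDdef, firstHit, counterInput]
    split_ifs
    exacts [⟨_, hY _⟩, ⟨_, hy₀⟩, ⟨_, hy₀⟩]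
  refine ⟨hdom, fun y hyΦ hyg => ?_⟩
  by_cases h : ∃ i, Commits p₀ m (q i)
  · have hD : D = counterInput p₀ y₀ m P (Nat.find h) (q (Nat.find h)) := dif_pos h
    obtain ⟨hn, hk⟩ := Nat.find_spec h
    have hwn : IsPrefixOf (wn q (Nat.find h)) D := hn.isPrefixOf_iff.2
      (hD ▸ cylinder_anti _ (le_max_right _ _) (counterInput_mem_cylinder hP _ _))
    have hwk : IsPrefixOf ((wk q (Nat.find h)).take m) y :=
      (isPrefixOf_of_mem_Phi hyΦ hwn).mono (List.take_prefix _ _)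
    rw [hD, counterInput] at hyg
    split_ifs at hyg with hpred
    · have hclose : y ∈ cylinder y₀ m := by simpa [hk] using hpred.isPrefixOf_iff.1 hwk
      exact hne _ (Part.mem_unique hyg (hY _) ▸ hclose)
    · exact hpred (Part.mem_unique hyg hy₀ ▸ hwk)
  · have hD : D = p₀ := dif_neg h
    obtain ⟨i, hi, hlt⟩ := (Part.dom_iff_mem.2 ⟨y, hyΦ⟩).2 m
    exact h ⟨i, hD ▸ hi, hlt.le⟩

lemma effectivelyDiscontinuous_toProblem (hg : ¬ Continuous fun p : g.Dom => g.fn p p.2) :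
    EffectivelyDiscontinuous g.toProblem := by
  rw [continuous_fn_iff] at hg
  push Not at hg
  obtain ⟨p₀, y₀, hy₀, m, hm⟩ := hg
  choose P Y hY hP hne using hm
  exact ⟨_, continuous_firstHit fun i a => cylinder_anti _ (le_max_left _ _)
    (counterInput_mem_cylinder hP i a), discontinuityFunction_firstHit hy₀ hY hP hne⟩

end PFun

/-- Every single-valued partial function on Baire space, viewed as a problem, is either
continuous or effectively discontinuous. -/
theorem single_valued_continuous_or_effectively_discontinuous (g : Baire →. Baire) :
    ContinuousProblem (fun p => {y | y ∈ g p}) ∨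
      EffectivelyDiscontinuous (fun p => {y | y ∈ g p}) := by
  by_cases hg : Continuous fun p : g.Dom => g.fn p p.2
  · exact Or.inl (g.continuousProblem_toProblem hg)
  · exact Or.inr (g.effectivelyDiscontinuous_toProblem hg)
end

section
/- For every problem f :⊆ ℕ^ℕ ⇉ ℕ^ℕ and each player P ∈ {I, II}: Player P has a winning strategy in the Wadge game of f if and only if Player P has a winning strategy in the Lipschitz game of f^w. -/
/-!
Since `w` is a bijection `ℕ ≃ List ℕ`, a move of the Wadge game is coded by a single number,
and a run `(p, q)` of the Lipschitz game of `f^w` is the Wadge run `(w ∘ p, w ∘ q)` of `f`: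
Player II wins the one iff she wins the other. The only point needing care is that
`f^w(p) ≠ ∅` must follow from `p ∈ dom(w*)` and `f(w* p) ≠ ∅`; a witness `y ∈ f(w* p)` is
coded by the sequence of one-letter words `[y 0], [y 1], …`.
-/

open Encodable

lemma word_encode (l : List ℕ) : word (encode l) = l :=
  Denumerable.ofNat_encode l

lemma word_encode_comp (xs : ℕ → List ℕ) : (fun i => word (encode (xs i))) = xs :=
  funext fun i => word_encode (xs i)

lemma concatN_succ (ms : ℕ → List ℕ) (n : ℕ) :
    concatN ms (n + 1) = concatN ms n ++ ms n := by
  simp [concatN, List.range_succ]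

lemma concatN_prefix_concatN (ms : ℕ → List ℕ) {a b : ℕ} (h : a ≤ b) :
    concatN ms a <+: concatN ms b := by
  induction b, h using Nat.le_induction with
  | base => exact List.prefix_refl _
  | succ b _ ih => exact ih.trans (concatN_succ ms b ▸ List.prefix_append _ _)

lemma exists_forall_isPrefixOf_concatN (ms : ℕ → List ℕ) :
    ∃ p : Baire, ∀ n, IsPrefixOf (concatN ms n) p := by
  classical
  refine ⟨fun m => if h : ∃ k, m < (concatN ms k).length then
    (concatN ms (Nat.find h))[m]'(Nat.find_spec h) else 0, fun n => ?_⟩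
  refine List.ext_getElem (by simp) fun i hi _ => ?_
  have hex : ∃ k, i < (concatN ms k).length := ⟨n, hi⟩
  simp only [List.getElem_map, List.getElem_range, dif_pos hex]
  rcases le_total (Nat.find hex) n with hle | hle
  · exact ((concatN_prefix_concatN ms hle).getElem _).symm
  · exact (concatN_prefix_concatN ms hle).getElem _

lemma isPrefixOf_concatN_playLim (ms : ℕ → List ℕ) (n : ℕ) :
    IsPrefixOf (concatN ms n) (playLim ms) :=
  Classical.epsilon_spec (exists_forall_isPrefixOf_concatN ms) n

lemma playLim_eq_of_forall_isPrefixOf {ms : ℕ → List ℕ} (h : PlayInf ms) {p : Baire}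
    (hp : ∀ n, IsPrefixOf (concatN ms n) p) : playLim ms = p := by
  funext m
  obtain ⟨n, hn⟩ := h m
  have e1 := List.getElem_of_eq (isPrefixOf_concatN_playLim ms n) hn
  have e2 := List.getElem_of_eq (hp n) hn
  simp only [List.getElem_map, List.getElem_range] at e1 e2
  exact e1.symm.trans e2

lemma concatN_singleton (y : Baire) (n : ℕ) : concatN (fun i => [y i]) n = histN y n := by
  induction n with
  | zero => rfl
  | succ n ih => simp [concatN_succ, ih, histN, List.range_succ]

lemma playInf_singleton (y : Baire) : PlayInf fun i => [y i] :=
  fun m => ⟨m + 1, by simp [concatN_singleton, histN]⟩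

lemma playLim_singleton (y : Baire) : playLim (fun i => [y i]) = y :=
  playLim_eq_of_forall_isPrefixOf (playInf_singleton y) fun n => by
    simp [IsPrefixOf, concatN_singleton, histN]

section WordLift

variable {f : Problem}

lemma wordLift_nonempty_iff {p : Baire} :
    (wordLift f p).Nonempty ↔ wstarDom p ∧ (f (wstar p)).Nonempty := by
  refine ⟨fun ⟨_, hp, hne, _⟩ => ⟨hp, hne⟩, fun ⟨hp, y, hy⟩ => ?_⟩
  have hcode : (fun i => word (encode [y i])) = fun i => [y i] := word_encode_comp _
  refine ⟨fun i => encode [y i], hp, ⟨y, hy⟩, ?_, ?_⟩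
  · simpa only [wstarDom, hcode] using playInf_singleton y
  · simpa only [wstar, hcode, playLim_singleton] using hy

lemma lipIIWins_wordLift_iff (p q : Baire) :
    LipIIWins (wordLift f) p q ↔ WadgeIIWins f (fun i => word (p i)) (fun i => word (q i)) := by
  rw [LipIIWins, wordLift_nonempty_iff]
  exact ⟨fun h hp => (h hp).2.2, fun h hp => ⟨hp.1, hp.2, h hp⟩⟩

end WordLift

section Strategies

def lipOfWadgeStrategy (σ : List (List ℕ) → List ℕ) : List ℕ → ℕ :=
  fun l => encode (σ (l.map word))

def wadgeOfLipStrategy (τ : List ℕ → ℕ) : List (List ℕ) → List ℕ :=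
  fun L => word (τ (L.map encode))

lemma word_lipOfWadgeStrategy_histN (σ : List (List ℕ) → List ℕ) (x : Baire) (n : ℕ) :
    word (lipOfWadgeStrategy σ (histN x n)) = σ (histW (fun i => word (x i)) n) := by
  simp [lipOfWadgeStrategy, word_encode, histN, histW, Function.comp_def]

lemma wadgeOfLipStrategy_histW (τ : List ℕ → ℕ) (xs : ℕ → List ℕ) (n : ℕ) :
    wadgeOfLipStrategy τ (histW xs n) = word (τ (histN (fun i => encode (xs i)) n)) := by
  simp [wadgeOfLipStrategy, histN, histW, Function.comp_def]

variable {f : Problem}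

lemma WadgeWinningI.lipWinningI_wordLift {σ : List (List ℕ) → List ℕ}
    (hσ : WadgeWinningI f σ) : LipWinningI (wordLift f) (lipOfWadgeStrategy σ) := by
  intro y
  rw [lipIIWins_wordLift_iff]
  simpa only [word_lipOfWadgeStrategy_histN] using hσ fun i => word (y i)

lemma LipWinningI.wadgeWinningI {τ : List ℕ → ℕ}
    (hτ : LipWinningI (wordLift f) τ) : WadgeWinningI f (wadgeOfLipStrategy τ) := by
  intro ys
  have h := hτ fun i => encode (ys i)
  rwa [lipIIWins_wordLift_iff, word_encode_comp, ← funext (wadgeOfLipStrategy_histW τ ys)] at h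

lemma WadgeWinningII.lipWinningII_wordLift {σ : List (List ℕ) → List ℕ}
    (hσ : WadgeWinningII f σ) : LipWinningII (wordLift f) (lipOfWadgeStrategy σ) := by
  intro x
  rw [lipIIWins_wordLift_iff]
  simpa only [word_lipOfWadgeStrategy_histN] using hσ fun i => word (x i)

lemma LipWinningII.wadgeWinningII {τ : List ℕ → ℕ}
    (hτ : LipWinningII (wordLift f) τ) : WadgeWinningII f (wadgeOfLipStrategy τ) := by
  intro xs
  have h := hτ fun i => encode (xs i)
  rwa [lipIIWins_wordLift_iff, word_encode_comp,
    ← funext fun i => wadgeOfLipStrategy_histW τ xs (i + 1)] at h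

end Strategies

/-- For each player, having a winning strategy in the Wadge game of `f` is equivalent to
having a winning strategy in the Lipschitz game of `f^w`. -/
theorem wadge_iff_lipschitz_wordLift (f : Problem) :
    ((∃ σ : List (List ℕ) → List ℕ, WadgeWinningI f σ) ↔
      ∃ τ : List ℕ → ℕ, LipWinningI (wordLift f) τ) ∧
    ((∃ σ : List (List ℕ) → List ℕ, WadgeWinningII f σ) ↔
      ∃ τ : List ℕ → ℕ, LipWinningII (wordLift f) τ) :=
  ⟨⟨fun ⟨_, hσ⟩ => ⟨_, hσ.lipWinningI_wordLift⟩, fun ⟨_, hτ⟩ => ⟨_, hτ.wadgeWinningI⟩⟩,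
   ⟨fun ⟨_, hσ⟩ => ⟨_, hσ.lipWinningII_wordLift⟩, fun ⟨_, hτ⟩ => ⟨_, hτ.wadgeWinningII⟩⟩⟩
end
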